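/- Define a sequence by a₀ = 0, a₁ = 1 and a_{k+1} := a_k + 2^{−k(k+1)/2} for k ≥ 1; let a := lim_{k→∞} a_k (which exists and satisfies a < 2), and let b_k := (a_k + a_{k+1})/2. Define f₉ := χ_{(a, a+1)} + Σ_{k≥0} χ_{(b_k, a_{k+1})}. Then a is not a Lebesgue point of f₉, yet the Hardy–Littlewood maximal function Mf₉ is continuous at the point a (indeed Mf₉(a) = 1). -/

import Mathlib

open MeasureTheory Filter Set Topology
open scoped Classical

/-- The average of `f` over the interval of radius `r` centered at `x`. -/
noncomputable def avgFn (f : ℝ → ℝ) (x r : ℝ) : ℝ :=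
  (1 / (2 * r)) * ∫ y in (-r)..r, f (x + y)

/-- The (uncentered-in-value, centered-in-interval) Hardy–Littlewood maximal function,
taking values in `[0,∞]`. -/
noncomputable def maxFn (f : ℝ → ℝ) (x : ℝ) : ENNReal :=
  ⨆ (r : ℝ) (_ : 0 < r), ENNReal.ofReal (avgFn (fun y => |f y|) x r)

/-- The set `E_{f,x}` of radii attaining the maximal value. -/
def freqSet (f : ℝ → ℝ) (x : ℝ) : Set ℝ :=
  {r : ℝ | 0 < r ∧ maxFn f x = ENNReal.ofReal (avgFn (fun y => |f y|) x r)}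

/-- The frequency function `Tf`. -/
noncomputable def freqFn (f : ℝ → ℝ) (x : ℝ) : ℝ :=
  if (freqSet f x).Nonempty then sInf (freqSet f x) else 0

/-- `x` is a Lebesgue point of `f`. -/
def IsLebesguePoint (f : ℝ → ℝ) (x : ℝ) : Prop :=
  ∃ c : ℝ, Tendsto (fun r : ℝ => (1 / (2 * r)) * ∫ t in (-r)..r, |f (x + t) - c|)
    (nhdsWithin 0 (Set.Ioi 0)) (nhds 0)


noncomputable def dd (k : ℕ) : ℝ := (2:ℝ) ^ (-((k * (k + 1) / 2 : ℕ) : ℤ))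

lemma dd_pos (k : ℕ) : 0 < dd k := zpow_pos (by norm_num) _

lemma dd_succ (k : ℕ) : dd (k + 1) = dd k * (2:ℝ) ^ (-((k:ℤ) + 1)) := by
  have h2 : 2 ∣ k * (k + 1) := (Nat.even_mul_succ_self k).two_dvd
  have hmul : (k+1) * (k + 1 + 1) = k * (k+1) + 2 * (k+1) := by ring
  have hT : ((k+1) * (k + 1 + 1) / 2 : ℕ) = (k * (k + 1) / 2 : ℕ) + (k + 1) := by
    obtain ⟨m, hm⟩ := h2; omega
  rw [dd, dd, hT, ← zpow_add₀ (by norm_num : (2:ℝ) ≠ 0)]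
  congr 1; push_cast; ring

lemma dd_le_geom (k j : ℕ) : dd (k + j) ≤ dd k * (1/2) ^ j := by
  induction j with
  | zero => simp
  | succ n ih =>
      have hle : (2:ℝ) ^ (-((k + n : ℕ):ℤ) - 1) ≤ (1/2 : ℝ) := by
        rw [show (1/2:ℝ) = (2:ℝ)^(-1 : ℤ) by norm_num]
        exact zpow_le_zpow_right₀ (by norm_num) (by omega)
      calc dd (k + (n+1)) = dd ((k + n) + 1) := rfl
        _ = dd (k + n) * (2:ℝ) ^ (-((k + n : ℕ):ℤ) - 1) := by
            rw [dd_succ (k+n)]; congr 1; push_cast; ring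
        _ ≤ (dd k * (1/2)^n) * (1/2) := by
            exact mul_le_mul ih hle (zpow_pos (by norm_num) _).le (mul_nonneg (dd_pos k).le (by positivity))
        _ = dd k * (1/2)^(n+1) := by ring

lemma dd_summable (k : ℕ) : Summable (fun j => dd (k + j)) := by
  apply Summable.of_nonneg_of_le (fun j => (dd_pos _).le) (dd_le_geom k)
  exact (summable_geometric_of_lt_one (by norm_num) (by norm_num)).mul_left _

noncomputable def et (k : ℕ) : ℝ := ∑' j, dd (k + j)

lemma et_ge (k : ℕ) : dd k ≤ et k := by
  have := Summable.le_tsum (dd_summable k) 0 (fun j _ => (dd_pos _).le)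
  simpa [et] using this

lemma et_pos (k : ℕ) : 0 < et k := lt_of_lt_of_le (dd_pos k) (et_ge k)

lemma et_le (k : ℕ) : et k ≤ 2 * dd k := by
  have h1 : et k ≤ ∑' j : ℕ, dd k * (1/2)^j := by
    apply Summable.tsum_le_tsum (dd_le_geom k) (dd_summable k)
    exact (summable_geometric_of_lt_one (by norm_num) (by norm_num)).mul_left _
  have h2 : ∑' j : ℕ, dd k * (1/2:ℝ)^j = dd k * 2 := by
    rw [tsum_mul_left, tsum_geometric_of_lt_one (by norm_num) (by norm_num)]
    norm_num
  linarith

lemma et_succ (k : ℕ) : et k = dd k + et (k + 1) := by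
  rw [et, et, Summable.tsum_eq_zero_add (dd_summable k)]
  simp only [Nat.add_zero]
  congr 1
  apply tsum_congr; intro b; congr 1; omega

lemma et_anti (k : ℕ) : et (k+1) < et k := by
  have := et_succ k; have := dd_pos k; linarith

lemma et_mono : ∀ {j k : ℕ}, j ≤ k → et k ≤ et j := by
  intro j k h
  exact antitone_nat_of_succ_le (fun n => (et_anti n).le) h

lemma et_succ_le (k : ℕ) : et (k + 1) ≤ (1/2)^k * et k := by
  have h1 : et (k+1) ≤ 2 * dd (k+1) := et_le _
  have h2 : dd (k+1) = dd k * (2:ℝ)^(-(k:ℤ)-1) := by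
    rw [dd_succ]; congr 1; ring
  have h3 : (2:ℝ)^(-(k:ℤ)-1) = (1/2)^k * (1/2) := by
    rw [zpow_sub₀ (by norm_num : (2:ℝ) ≠ 0), zpow_neg, zpow_natCast]
    norm_num; ring_nf
    simp only [one_div]
  have h4 : dd k ≤ et k := et_ge k
  have h5 : (0:ℝ) ≤ (1/2:ℝ)^k := by positivity
  calc et (k+1) ≤ 2 * (dd k * ((1/2)^k * (1/2))) := by rw [← h3, ← h2]; exact h1
    _ = (1/2)^k * dd k := by ring
    _ ≤ (1/2)^k * et k := mul_le_mul_of_nonneg_left h4 h5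

lemma dd_le_pow (k : ℕ) : dd k ≤ (1/2:ℝ)^k := by
  have := dd_le_geom 0 k
  have h0 : dd 0 = 1 := by norm_num [dd]
  simpa [h0] using this

lemma et_tendsto : Tendsto et atTop (𝓝 0) := by
  have hb : ∀ k, et k ≤ 2 * (1/2)^k := by
    intro k; have := dd_le_pow k; have := et_le k; linarith
  have h1 : Tendsto (fun k : ℕ => 2 * (1/2:ℝ)^k) atTop (𝓝 0) := by
    have := tendsto_pow_atTop_nhds_zero_of_lt_one (by norm_num : (0:ℝ) ≤ 1/2) (by norm_num)
    simpa using this.const_mul 2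
  exact squeeze_zero (fun k => (et_pos k).le) hb h1

lemma et_one_le : et 1 ≤ 3/4 := by
  have h1 : et 1 = dd 1 + et 2 := et_succ 1
  have h2 : et 2 ≤ 2 * dd 2 := et_le 2
  have hd1 : dd 1 = 1/2 := by norm_num [dd]
  have hd2 : dd 2 = 1/8 := by
    show (2:ℝ) ^ (-((2 * (2+1) / 2 : ℕ) : ℤ)) = 1/8
    norm_num
  linarith [h1, h2, hd1, hd2, et_pos 2]
noncomputable def LL : ℝ := 1 + et 1

noncomputable def aa (k : ℕ) : ℝ := if k = 0 then 0 else LL - et k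

noncomputable def bb (k : ℕ) : ℝ := (aa k + aa (k + 1)) / 2

lemma aa_zero : aa 0 = 0 := rfl
lemma aa_eq (k : ℕ) (hk : 1 ≤ k) : aa k = LL - et k := by
  rw [aa, if_neg (by omega)]

lemma aa_one : aa 1 = 1 := by rw [aa_eq 1 le_rfl, LL]; ring

lemma LL_lt_two : LL < 2 := by have := et_one_le; rw [LL]; linarith
lemma LL_pos : 0 < LL := by have := et_pos 1; rw [LL]; linarith
lemma one_lt_LL : 1 < LL := by have := et_pos 1; rw [LL]; linarith

lemma aa_lt_LL (k : ℕ) : aa k < LL := by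
  rcases Nat.eq_zero_or_pos k with h | h
  · rw [h, aa_zero]; exact LL_pos
  · rw [aa_eq k h]; have := et_pos k; linarith

lemma aa_succ_eq (k : ℕ) : aa (k+1) = LL - et (k+1) := aa_eq (k+1) (Nat.succ_le_succ (Nat.zero_le k))

lemma aa_lt_succ (k : ℕ) : aa k < aa (k + 1) := by
  rcases Nat.eq_zero_or_pos k with h | h
  · subst h; rw [aa_zero, aa_succ_eq]
    have := et_anti 0; have := et_pos 1; rw [LL]
    have : et 1 ≤ et 1 := le_rfl
    have h0 : (0:ℝ) < 1 + et 1 - et 1 := by linarith [et_pos 1]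
    linarith [et_pos 1]
  · rw [aa_eq k h, aa_succ_eq]; have := et_anti k; linarith

lemma aa_mono : Monotone aa := monotone_nat_of_le_succ (fun k => (aa_lt_succ k).le)

lemma bb_sub_aa (k : ℕ) (hk : 1 ≤ k) : bb k - aa k = dd k / 2 := by
  rw [bb, aa_eq k hk, aa_succ_eq]
  have := et_succ k; linarith

lemma aa_succ_sub_bb (k : ℕ) (hk : 1 ≤ k) : aa (k+1) - bb k = dd k / 2 := by
  rw [bb, aa_eq k hk, aa_succ_eq]
  have := et_succ k; linarith

lemma aa_lt_bb (k : ℕ) : aa k < bb k := by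
  rw [bb]; have := aa_lt_succ k; linarith

lemma bb_lt_aa_succ (k : ℕ) : bb k < aa (k + 1) := by
  rw [bb]; have := aa_lt_succ k; linarith

lemma bb_lt_LL (k : ℕ) : bb k < LL := (bb_lt_aa_succ k).trans (aa_lt_LL (k+1))

lemma bb_mono : Monotone bb :=
  monotone_nat_of_le_succ (fun k => ((bb_lt_aa_succ k).trans (aa_lt_bb (k+1))).le)

lemma LL_sub_bb (k : ℕ) (hk : 1 ≤ k) : LL - bb k = (et k + et (k+1)) / 2 := by
  rw [bb, aa_eq k hk, aa_succ_eq]; ring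

lemma LL_sub_bb_le_one (k : ℕ) (hk : 1 ≤ k) : LL - bb k ≤ 1 := by
  rw [LL_sub_bb k hk]
  have h1 : et k ≤ et 1 := et_mono hk
  have h2 : et (k+1) ≤ et 1 := et_mono (by omega)
  have := et_one_le; linarith

lemma aa_tendsto : Tendsto aa atTop (𝓝 LL) := by
  have h : Tendsto (fun k => LL - et k) atTop (𝓝 LL) := by
    have := et_tendsto.const_sub LL
    simpa using this
  apply h.congr'
  filter_upwards [eventually_ge_atTop 1] with k hk
  exact (aa_eq k hk).symm

-- the set S and function F
noncomputable def SS : Set ℝ := Ioo LL (LL+1) ∪ ⋃ k, Ioo (bb k) (aa (k+1))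

lemma SS_meas : MeasurableSet SS :=
  measurableSet_Ioo.union (MeasurableSet.iUnion (fun _ => measurableSet_Ioo))

noncomputable def FF : ℝ → ℝ := SS.indicator (fun _ => 1)

lemma aa_succ_le_LL (k : ℕ) : aa (k+1) ≤ LL := (aa_lt_LL (k+1)).le

lemma notmem_piece_of_gt {x : ℝ} {k : ℕ} (h : LL < x) : x ∉ Ioo (bb k) (aa (k+1)) := by
  intro hx; exact absurd hx.2 (by linarith [aa_succ_le_LL k])

lemma tsum_indicator_eq (x : ℝ) :
    (∑' k : ℕ, Set.indicator (Ioo (bb k) (aa (k+1))) (fun _ => (1:ℝ)) x) =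
      Set.indicator (⋃ k, Ioo (bb k) (aa (k+1))) (fun _ => (1:ℝ)) x := by
  by_cases hx : x ∈ ⋃ k, Ioo (bb k) (aa (k+1))
  · obtain ⟨_, ⟨k, rfl⟩, hk⟩ := hx
    rw [Set.indicator_of_mem (Set.mem_iUnion.mpr ⟨k, hk⟩)]
    rw [tsum_eq_single k]
    · exact Set.indicator_of_mem hk _
    · intro j hj
      apply Set.indicator_of_notMem
      rcases lt_or_gt_of_ne hj with h | h
      · -- j < k : x > bb k > aa k ≥ aa (j+1)
        intro hmem
        have h1 : aa (j+1) ≤ aa k := aa_mono (by omega)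
        have h2 : bb k < x := hk.1
        have := aa_lt_bb k
        linarith [hmem.2]
      · -- j > k : x < aa (k+1) ≤ aa j < bb j
        intro hmem
        have h1 : aa (k+1) ≤ aa j := aa_mono (by omega)
        have := aa_lt_bb j
        linarith [hmem.1, hk.2]
  · rw [Set.indicator_of_notMem hx]
    have hz : ∀ k : ℕ, Set.indicator (Ioo (bb k) (aa (k+1))) (fun _ => (1:ℝ)) x = 0 := by
      intro k
      apply Set.indicator_of_notMem
      intro hmem; exact hx (Set.mem_iUnion.mpr ⟨k, hmem⟩)
    simp only [hz, tsum_zero]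

lemma FF_eq (x : ℝ) :
    Set.indicator (Ioo LL (LL+1)) (fun _ => (1:ℝ)) x +
      (∑' k : ℕ, Set.indicator (Ioo (bb k) (aa (k+1))) (fun _ => (1:ℝ)) x) = FF x := by
  rw [tsum_indicator_eq, FF, SS]
  by_cases h1 : x ∈ Ioo LL (LL+1)
  · have h2 : x ∉ ⋃ k, Ioo (bb k) (aa (k+1)) := by
      intro hx
      obtain ⟨_, ⟨k, rfl⟩, hk⟩ := hx
      exact notmem_piece_of_gt h1.1 hk
    rw [Set.indicator_of_mem h1, Set.indicator_of_notMem h2,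
      Set.indicator_of_mem (Set.mem_union_left _ h1)]
    norm_num
  · by_cases h2 : x ∈ ⋃ k, Ioo (bb k) (aa (k+1))
    · rw [Set.indicator_of_notMem h1, Set.indicator_of_mem h2,
        Set.indicator_of_mem (Set.mem_union_right _ h2)]
      norm_num
    · rw [Set.indicator_of_notMem h1, Set.indicator_of_notMem h2,
        Set.indicator_of_notMem (by simp [h1, h2])]
      norm_num

lemma FF_nonneg (x : ℝ) : 0 ≤ FF x := Set.indicator_nonneg (fun _ _ => zero_le_one) x
lemma FF_le_one (x : ℝ) : FF x ≤ 1 := Set.indicator_le_self' (fun _ _ => zero_le_one) x |>.trans (by by_cases h : x ∈ SS <;> simp [FF, h])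
lemma abs_FF (x : ℝ) : |FF x| = FF x := abs_of_nonneg (FF_nonneg x)

lemma FF_integrableOn (A : Set ℝ) (hA : volume A < ⊤) : IntegrableOn FF A volume := by
  apply Integrable.indicator _ SS_meas
  exact (integrableOn_const_iff (C := (1:ℝ))).mpr (Or.inr hA)

lemma intF (u v : ℝ) (huv : u ≤ v) :
    ∫ t in u..v, FF t = (volume (SS ∩ Ioc u v)).toReal := by
  rw [intervalIntegral.integral_of_le huv, FF, MeasureTheory.setIntegral_indicator SS_meas]
  rw [Set.inter_comm]
  rw [MeasureTheory.setIntegral_const]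
  simp
  rfl

lemma avgF_eq (x r : ℝ) (hr : 0 < r) :
    avgFn (fun y => |FF y|) x r = (volume (SS ∩ Ioc (x - r) (x + r))).toReal / (2*r) := by
  rw [avgFn]
  simp only [abs_FF]
  have hcomp : (∫ y in (-r)..r, FF (x + y)) = ∫ t in (x + -r)..(x + r), FF t :=
    intervalIntegral.integral_comp_add_left FF x
  rw [hcomp, show x + -r = x - r by ring, intF _ _ (by linarith)]
  ring

lemma vol_Ioc_lt_top (u v : ℝ) : volume (SS ∩ Ioc u v) < ⊤ :=
  lt_of_le_of_lt (measure_mono Set.inter_subset_right) (by rw [Real.volume_Ioc]; exact ENNReal.ofReal_lt_top)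

lemma avg_le_one (x r : ℝ) (hr : 0 < r) : avgFn (fun y => |FF y|) x r ≤ 1 := by
  rw [avgF_eq x r hr]
  rw [div_le_one (by linarith)]
  have h1 : volume (SS ∩ Ioc (x-r) (x+r)) ≤ volume (Ioc (x-r) (x+r)) :=
    measure_mono Set.inter_subset_right
  have h2 : volume (Ioc (x-r) (x+r)) = ENNReal.ofReal (2*r) := by
    rw [Real.volume_Ioc]; congr 1; ring
  calc (volume (SS ∩ Ioc (x-r) (x+r))).toReal
      ≤ (ENNReal.ofReal (2*r)).toReal := by
        apply ENNReal.toReal_mono ENNReal.ofReal_ne_top (h2 ▸ h1)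
    _ = 2*r := ENNReal.toReal_ofReal (by linarith)

lemma avg_nonneg (x r : ℝ) (hr : 0 < r) : 0 ≤ avgFn (fun y => |FF y|) x r := by
  rw [avgF_eq x r hr]; positivity

lemma maxFn_le_one (y : ℝ) : maxFn FF y ≤ 1 := by
  apply iSup₂_le
  intro r hr
  calc ENNReal.ofReal (avgFn (fun y => |FF y|) y r) ≤ ENNReal.ofReal 1 :=
        ENNReal.ofReal_le_ofReal (avg_le_one y r hr)
    _ = 1 := ENNReal.ofReal_one

lemma maxFn_ne_top (y : ℝ) : maxFn FF y ≠ ⊤ :=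
  ne_top_of_le_ne_top (by simp) (maxFn_le_one y)

noncomputable def ZZ (k : ℕ) : Set ℝ := (⋃ j, Icc (aa (k+j)) (bb (k+j))) ∪ {LL}

lemma ZZ_vol (k : ℕ) (hk : 1 ≤ k) : volume (ZZ k) ≤ ENNReal.ofReal (et k / 2) := by
  rw [ZZ]
  calc volume ((⋃ j, Icc (aa (k+j)) (bb (k+j))) ∪ {LL})
      ≤ volume (⋃ j, Icc (aa (k+j)) (bb (k+j))) + volume ({LL} : Set ℝ) := measure_union_le _ _
    _ = volume (⋃ j, Icc (aa (k+j)) (bb (k+j))) := by rw [Real.volume_singleton, add_zero]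
    _ ≤ ∑' j, volume (Icc (aa (k+j)) (bb (k+j))) := measure_iUnion_le _
    _ = ∑' j, ENNReal.ofReal (dd (k+j) / 2) := by
        apply tsum_congr; intro j
        rw [Real.volume_Icc]
        congr 1
        have := bb_sub_aa (k+j) (by omega)
        linarith
    _ = ENNReal.ofReal (∑' j, dd (k+j) / 2) := by
        rw [ENNReal.ofReal_tsum_of_nonneg (fun j => div_nonneg (dd_pos _).le (by norm_num))
          ((dd_summable k).div_const 2)]
    _ = ENNReal.ofReal (et k / 2) := by rw [tsum_div_const]; rfl

lemma exists_le_bb (x : ℝ) (hx : x < LL) : ∃ n, x ≤ bb n := by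
  obtain ⟨n, hn⟩ := (et_tendsto.eventually (gt_mem_nhds (show (0:ℝ) < LL - x by linarith))).exists
  refine ⟨n+1, ?_⟩
  have h1 : aa (n+1) = LL - et (n+1) := aa_succ_eq n
  have h2 : et (n+1) < et n := et_anti n
  have := aa_lt_bb (n+1)
  linarith

lemma diff_subset_SS (k : ℕ) (hk : 1 ≤ k) (u w : ℝ) (hu : bb (k-1) ≤ u) (hw : w ≤ LL + 1) :
    Ioo u w \ ZZ k ⊆ SS := by
  rintro x ⟨⟨hxu, hxw⟩, hxZ⟩
  rcases lt_trichotomy x LL with hlt | heq | hgt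
  · -- x < LL
    have hex : ∃ n, x ≤ bb n := exists_le_bb x hlt
    set n := Nat.find hex with hn_def
    clear_value n
    have hn : x ≤ bb n := hn_def ▸ Nat.find_spec hex
    have hmin : ∀ m, m < n → ¬ x ≤ bb m := fun m hm => Nat.find_min hex (hn_def ▸ hm)
    have hkn : k ≤ n := by
      by_contra hcon
      push_neg at hcon
      have h1 : bb n ≤ bb (k-1) := bb_mono (by omega)
      linarith
    have hn1 : 1 ≤ n := le_trans hk hkn
    obtain ⟨m, rfl⟩ : ∃ m, n = m + 1 := ⟨n - 1, by omega⟩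
    have hx_notin : x ∉ Icc (aa (m+1)) (bb (m+1)) := by
      intro hmem
      apply hxZ
      rw [ZZ]
      apply Set.mem_union_left
      apply Set.mem_iUnion.mpr
      exact ⟨(m+1) - k, by rwa [show k + ((m+1) - k) = m + 1 by omega]⟩
    have hlt_aa : x < aa (m+1) := by
      rcases lt_or_ge x (aa (m+1)) with h | h
      · exact h
      · exact absurd ⟨h, hn⟩ hx_notin
    have hgt_bb : bb m < x := by
      have := hmin m (by omega)
      linarith [not_le.mp this]
    exact Set.mem_union_right _ (Set.mem_iUnion.mpr ⟨m, hgt_bb, hlt_aa⟩)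
  · exact absurd (show x ∈ ZZ k by rw [ZZ]; exact Set.mem_union_right _ (by simp [heq])) hxZ
  · exact Set.mem_union_left _ ⟨hgt, by linarith⟩

lemma vol_lower (k : ℕ) (hk : 1 ≤ k) (u w : ℝ) (hu : bb (k-1) ≤ u) (hw : w ≤ LL + 1) :
    ENNReal.ofReal ((w - u) - et k / 2) ≤ volume (SS ∩ Ioc u w) := by
  have hsub : Ioo u w \ ZZ k ⊆ SS ∩ Ioc u w := by
    intro x hx
    exact ⟨diff_subset_SS k hk u w hu hw hx, Set.Ioo_subset_Ioc_self hx.1⟩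
  calc ENNReal.ofReal ((w - u) - et k / 2)
      = ENNReal.ofReal (w - u) - ENNReal.ofReal (et k / 2) := by
        rw [ENNReal.ofReal_sub _ (by linarith [et_pos k])]
    _ ≤ volume (Ioo u w) - volume (ZZ k) := by
        apply tsub_le_tsub _ (ZZ_vol k hk)
        rw [Real.volume_Ioo]
    _ ≤ volume (Ioo u w \ ZZ k) := le_measure_diff
    _ ≤ volume (SS ∩ Ioc u w) := measure_mono hsub

lemma avg_lb (k : ℕ) (hk : 1 ≤ k) (x r : ℝ) (hr : 0 < r)
    (h1 : bb (k-1) ≤ x - r) (h2 : x + r ≤ LL + 1) :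
    1 - (et k / 2) / (2*r) ≤ avgFn (fun y => |FF y|) x r := by
  rw [avgF_eq x r hr]
  have hv := vol_lower k hk (x-r) (x+r) h1 h2
  have hfin := vol_Ioc_lt_top (x-r) (x+r)
  have h3 : (x + r - (x - r)) - et k / 2 ≤ (volume (SS ∩ Ioc (x-r) (x+r))).toReal :=
    (ENNReal.ofReal_le_iff_le_toReal hfin.ne).mp hv
  have h4 : 2*r - et k / 2 ≤ (volume (SS ∩ Ioc (x-r) (x+r))).toReal := by
    have : x + r - (x - r) = 2*r := by ring
    linarith [this ▸ h3]
  rw [le_div_iff₀ (by linarith : (0:ℝ) < 2*r)]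
  have heq : (1 - et k / 2 / (2*r)) * (2*r) = 2*r - et k / 2 := by
    field_simp
  linarith

lemma maxFn_ge_of_avg (y r c : ℝ) (hr : 0 < r) (h : c ≤ avgFn (fun t => |FF t|) y r) :
    ENNReal.ofReal c ≤ maxFn FF y := by
  calc ENNReal.ofReal c ≤ ENNReal.ofReal (avgFn (fun t => |FF t|) y r) :=
        ENNReal.ofReal_le_ofReal h
    _ ≤ maxFn FF y := le_iSup₂_of_le r hr le_rfl

lemma toReal_maxFn_ge (y c : ℝ) (h : ENNReal.ofReal c ≤ maxFn FF y) : c ≤ (maxFn FF y).toReal := by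
  rcases le_or_gt c 0 with hc | hc
  · exact hc.trans ENNReal.toReal_nonneg
  · have := ENNReal.toReal_mono (maxFn_ne_top y) h
    rwa [ENNReal.toReal_ofReal hc.le] at this

lemma toReal_maxFn_le (y : ℝ) : (maxFn FF y).toReal ≤ 1 :=
  ENNReal.toReal_le_of_le_ofReal zero_le_one (by rw [ENNReal.ofReal_one]; exact maxFn_le_one y)

noncomputable def GG (k : ℕ) : Set ℝ := ⋃ j, Ioo (aa (k+j)) (bb (k+j))

lemma GG_meas (k : ℕ) : MeasurableSet (GG k) := MeasurableSet.iUnion (fun _ => measurableSet_Ioo)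

lemma GG_vol (k : ℕ) (hk : 1 ≤ k) : volume (GG k) = ENNReal.ofReal (et k / 2) := by
  rw [GG, measure_iUnion _ (fun _ => measurableSet_Ioo)]
  · have : ∀ j, volume (Ioo (aa (k+j)) (bb (k+j))) = ENNReal.ofReal (dd (k+j) / 2) := by
      intro j
      rw [Real.volume_Ioo]
      congr 1
      have := bb_sub_aa (k+j) (by omega)
      linarith
    simp only [this]
    rw [← ENNReal.ofReal_tsum_of_nonneg (fun j => div_nonneg (dd_pos _).le (by norm_num))
      ((dd_summable k).div_const 2), tsum_div_const]
    rfl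
  · intro i j hij
    have key : ∀ i j : ℕ, i < j → Disjoint (Ioo (aa (k+i)) (bb (k+i))) (Ioo (aa (k+j)) (bb (k+j))) := by
      intro i j h
      apply Set.disjoint_left.mpr
      intro x hx1 hx2
      have h1 : bb (k+i) ≤ aa (k+j) := by
        calc bb (k+i) ≤ aa (k+i+1) := (bb_lt_aa_succ (k+i)).le
          _ ≤ aa (k+j) := aa_mono (by omega)
      linarith [hx1.2, hx2.1]
    rcases hij.lt_or_gt with h | h
    · exact key i j h
    · exact (key j i h).symm

lemma GG_subset (k : ℕ) (hk : 1 ≤ k) : GG k ⊆ Ioc (LL - et k) LL := by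
  rintro x ⟨_, ⟨j, rfl⟩, hx1, hx2⟩
  constructor
  · have h1 : aa k ≤ aa (k+j) := aa_mono (by omega)
    have h2 : aa k = LL - et k := aa_eq k hk
    linarith
  · linarith [bb_lt_LL (k+j)]

lemma GG_FF_zero (k : ℕ) (hk : 1 ≤ k) : ∀ x ∈ GG k, FF x = 0 := by
  rintro x ⟨_, ⟨j, rfl⟩, hx1, hx2⟩
  apply Set.indicator_of_notMem
  rintro (h | h)
  · linarith [bb_lt_LL (k+j), h.1]
  · obtain ⟨_, ⟨i, rfl⟩, hi1, hi2⟩ := h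
    rcases le_or_gt (k+j) i with h | h
    · have : bb (k+j) ≤ bb i := bb_mono h
      linarith
    · have : aa (i+1) ≤ aa (k+j) := aa_mono (by omega)
      linarith

lemma SS_FF_one : ∀ x ∈ SS, FF x = 1 := fun x hx => Set.indicator_of_mem hx _

lemma absFc_integrableOn (c : ℝ) (u v : ℝ) :
    IntegrableOn (fun t => |FF t - c|) (Ioc u v) volume := by
  apply Integrable.abs
  apply Integrable.sub
  · exact FF_integrableOn _ (by rw [Real.volume_Ioc]; exact ENNReal.ofReal_lt_top)
  · exact (integrableOn_const_iff (C := c)).mpr (Or.inr (by rw [Real.volume_Ioc]; exact ENNReal.ofReal_lt_top))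

lemma leb_integral_lb (k : ℕ) (hk : 1 ≤ k) (c : ℝ) :
    et k * |1 - c| + (et k / 2) * |c| ≤ ∫ t in (-(et k))..(et k), |FF (LL + t) - c| := by
  set r := et k with hr_def
  have hr : 0 < r := et_pos k
  have hr1 : r < 1 := by
    have h1 : et k ≤ et 1 := et_mono hk
    have := et_one_le
    linarith
  have hcomp : (∫ t in (-r)..r, |FF (LL + t) - c|) = ∫ t in (LL + -r)..(LL + r), |FF t - c| :=
    intervalIntegral.integral_comp_add_left (fun t => |FF t - c|) LL
  rw [hcomp, intervalIntegral.integral_of_le (by linarith)]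
  set A := Ioc LL (LL + r) with hA_def
  set G := GG k with hG_def
  have hGsub : G ⊆ Ioc (LL + -r) LL := by
    have := GG_subset k hk
    rw [← hr_def] at this
    intro x hx
    have := this hx
    exact ⟨by linarith [this.1], this.2⟩
  have hsub : A ∪ G ⊆ Ioc (LL + -r) (LL + r) := by
    rintro x (hx | hx)
    · exact ⟨by linarith [hx.1], hx.2⟩
    · exact ⟨(hGsub hx).1, by linarith [(hGsub hx).2]⟩
  have hdisj : Disjoint A G := by
    apply Set.disjoint_left.mpr
    intro x hx1 hx2
    linarith [hx1.1, (hGsub hx2).2]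
  have hintBig : IntegrableOn (fun t => |FF t - c|) (Ioc (LL + -r) (LL + r)) volume :=
    absFc_integrableOn c _ _
  have hintA : IntegrableOn (fun t => |FF t - c|) A volume := absFc_integrableOn c _ _
  have hintG : IntegrableOn (fun t => |FF t - c|) G volume :=
    hintBig.mono_set (fun x hx => hsub (Set.mem_union_right _ hx))
  have hmono : ∫ t in A ∪ G, |FF t - c| ≤ ∫ t in Ioc (LL + -r) (LL + r), |FF t - c| := by
    apply setIntegral_mono_set hintBig
    · filter_upwards with t using abs_nonneg _
    · exact HasSubset.Subset.eventuallyLE hsub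
  have hunion : ∫ t in A ∪ G, |FF t - c| = (∫ t in A, |FF t - c|) + ∫ t in G, |FF t - c| :=
    setIntegral_union hdisj (GG_meas k) hintA hintG
  have hintA_eq : ∫ t in A, |FF t - c| = r * |1 - c| := by
    rw [hA_def, integral_Ioc_eq_integral_Ioo]
    have hcong : ∀ t ∈ Ioo LL (LL + r), |FF t - c| = |1 - c| := by
      intro t ht
      rw [SS_FF_one t (Set.mem_union_left _ ⟨ht.1, by linarith [ht.2]⟩)]
    rw [setIntegral_congr_fun measurableSet_Ioo hcong, setIntegral_const]
    rw [measureReal_def, Real.volume_Ioo]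
    rw [ENNReal.toReal_ofReal (by linarith)]
    rw [smul_eq_mul]
    ring
  have hintG_eq : ∫ t in G, |FF t - c| = (et k / 2) * |c| := by
    have hcong : ∀ t ∈ G, |FF t - c| = |c| := by
      intro t ht
      rw [GG_FF_zero k hk t ht]
      simp [abs_sub_comm]
    rw [setIntegral_congr_fun (GG_meas k) hcong, setIntegral_const]
    rw [measureReal_def, GG_vol k hk, ENNReal.toReal_ofReal (by linarith [et_pos k]), smul_eq_mul]
  calc et k * |1 - c| + (et k / 2) * |c|
      = (∫ t in A, |FF t - c|) + ∫ t in G, |FF t - c| := by rw [hintA_eq, hintG_eq, ← hr_def]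
    _ = ∫ t in A ∪ G, |FF t - c| := hunion.symm
    _ ≤ ∫ t in Ioc (LL + -r) (LL + r), |FF t - c| := hmono

lemma not_leb : ¬ IsLebesguePoint FF LL := by
  rintro ⟨c, hc⟩
  have hseq : Tendsto et atTop (𝓝[>] (0:ℝ)) :=
    tendsto_nhdsWithin_of_tendsto_nhds_of_eventually_within et et_tendsto
      (Eventually.of_forall (fun k => et_pos k))
  have h2 := hc.comp hseq
  have hlb : ∀ᶠ k in atTop, (1:ℝ)/4 ≤
      (1 / (2 * et k)) * ∫ t in (-(et k))..(et k), |FF (LL + t) - c| := by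
    filter_upwards [eventually_ge_atTop 1] with k hk
    have hint := leb_integral_lb k hk c
    have hr : 0 < et k := et_pos k
    have habs : 1 ≤ |1 - c| + |c| := by
      have := abs_sub_abs_le_abs_sub 1 c
      have h3 := abs_add_le (1 - c) c
      simp at h3
      linarith [abs_nonneg (1-c), abs_nonneg c]
    have hstep : et k * (1/2) ≤ et k * |1 - c| + (et k / 2) * |c| := by
      have hXY := mul_le_mul_of_nonneg_left habs hr.le
      rw [mul_one, mul_add] at hXY
      have hX : 0 ≤ et k * |1 - c| := mul_nonneg hr.le (abs_nonneg _)
      linarith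
    calc (1:ℝ)/4 = (1 / (2 * et k)) * (et k * (1/2)) := by field_simp; ring
      _ ≤ (1 / (2 * et k)) * (et k * |1 - c| + (et k / 2) * |c|) := by
          apply mul_le_mul_of_nonneg_left hstep (by positivity)
      _ ≤ (1 / (2 * et k)) * ∫ t in (-(et k))..(et k), |FF (LL + t) - c| := by
          apply mul_le_mul_of_nonneg_left hint (by positivity)
  have := ge_of_tendsto h2 hlb
  norm_num at this

lemma dd_succ' (k : ℕ) : dd (k+1) = dd k * (1/2:ℝ)^(k+1) := by
  rw [dd_succ]
  congr 1
  rw [show (-((k:ℤ)+1)) = -((k+1 : ℕ) : ℤ) by push_cast; ring, zpow_neg, zpow_natCast]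
  rw [one_div, inv_pow]

lemma maxFn_LL_toReal : (maxFn FF LL).toReal = 1 := by
  apply le_antisymm (toReal_maxFn_le LL)
  have key : ∀ k : ℕ, 1 ≤ k → 1 - (1/2:ℝ)^k ≤ (maxFn FF LL).toReal := by
    intro k hk
    set r := LL - bb k with hrd
    have hr : 0 < r := by have := bb_lt_LL k; rw [hrd]; linarith
    have h2r : 2 * r = et k + et (k+1) := by
      have := LL_sub_bb k hk; rw [hrd]; linarith
    have h1 : bb ((k+1)-1) ≤ LL - r := by
      simp only [Nat.add_sub_cancel]; rw [hrd]; linarith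
    have h2 : LL + r ≤ LL + 1 := by
      have := LL_sub_bb_le_one k hk; rw [hrd]; linarith
    have havg := avg_lb (k+1) (by omega) LL r hr h1 h2
    have hbd : (et (k+1) / 2) / (2*r) ≤ (1/2:ℝ)^k := by
      rw [div_le_iff₀ (by linarith : (0:ℝ) < 2*r)]
      have hs := et_succ_le k
      have he1 := et_pos k
      have he2 := et_pos (k+1)
      have hp : (0:ℝ) ≤ (1/2:ℝ)^k := by positivity
      nlinarith
    apply toReal_maxFn_ge
    apply maxFn_ge_of_avg LL r _ hr
    calc 1 - (1/2:ℝ)^k ≤ 1 - (et (k+1)/2)/(2*r) := by linarith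
      _ ≤ _ := havg
  have htend : Tendsto (fun k : ℕ => 1 - (1/2:ℝ)^k) atTop (𝓝 1) := by
    have := tendsto_pow_atTop_nhds_zero_of_lt_one (by norm_num : (0:ℝ) ≤ 1/2) (by norm_num)
    have h1 := this.const_sub 1
    simpa using h1
  apply le_of_tendsto htend
  filter_upwards [eventually_ge_atTop 1] with k hk using key k hk

lemma maxFn_ge_left (k : ℕ) (hk : 2 ≤ k) (y : ℝ) (hy1 : aa k < y) (hy2 : y ≤ aa (k+1)) :
    1 - (1/2:ℝ)^k ≤ (maxFn FF y).toReal := by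
  set r := y - bb (k-1) with hrd
  have hbk : bb (k-1) < aa k := by
    have := bb_lt_aa_succ (k-1)
    rwa [show (k-1)+1 = k by omega] at this
  have hr : 0 < r := by rw [hrd]; linarith
  have hsub : aa k - bb (k-1) = dd (k-1) / 2 := by
    have := aa_succ_sub_bb (k-1) (by omega)
    rwa [show (k-1)+1 = k by omega] at this
  have h2r : dd (k-1) ≤ 2 * r := by rw [hrd]; linarith
  have h1 : bb (k-1) ≤ y - r := by rw [hrd]; linarith
  have h2 : y + r ≤ LL + 1 := by
    have hyL : y < LL := lt_of_le_of_lt hy2 (aa_lt_LL (k+1))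
    have hb1 : LL - bb (k-1) ≤ 1 := LL_sub_bb_le_one (k-1) (by omega)
    rw [hrd]; linarith
  have havg := avg_lb k (by omega) y r hr h1 h2
  have hddk : dd k = dd (k-1) * (1/2:ℝ)^k := by
    have := dd_succ' (k-1)
    rwa [show (k-1)+1 = k by omega] at this
  have hbd : (et k / 2) / (2*r) ≤ (1/2:ℝ)^k := by
    rw [div_le_iff₀ (by linarith : (0:ℝ) < 2*r)]
    have hle := et_le k
    have hd := dd_pos (k-1)
    have hp : (0:ℝ) ≤ (1/2:ℝ)^k := by positivity
    nlinarith [et_pos k]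
  apply toReal_maxFn_ge
  apply maxFn_ge_of_avg y r _ hr
  calc 1 - (1/2:ℝ)^k ≤ 1 - (et k/2)/(2*r) := by linarith
    _ ≤ _ := havg

lemma maxFn_right (y : ℝ) (hy1 : LL < y) (hy2 : y < LL + 1/4) :
    (maxFn FF y).toReal = 1 := by
  apply le_antisymm (toReal_maxFn_le y)
  set r := (y - LL)/2 with hrd
  have hr : 0 < r := by rw [hrd]; linarith
  have key : ∀ k : ℕ, 1 ≤ k → 1 - (et k/2)/(2*r) ≤ (maxFn FF y).toReal := by
    intro k hk
    have h1 : bb (k-1) ≤ y - r := by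
      have := bb_lt_LL (k-1)
      rw [hrd]; linarith
    have h2 : y + r ≤ LL + 1 := by rw [hrd]; linarith
    have havg := avg_lb k hk y r hr h1 h2
    exact toReal_maxFn_ge _ _ (maxFn_ge_of_avg y r _ hr havg)
  have htend : Tendsto (fun k : ℕ => 1 - (et k/2)/(2*r)) atTop (𝓝 1) := by
    have h1 : Tendsto (fun k : ℕ => (et k/2)/(2*r)) atTop (𝓝 0) := by
      have := (et_tendsto.div_const 2).div_const (2*r)
      simpa using this
    have h2 := h1.const_sub 1
    simpa using h2
  apply le_of_tendsto htend
  filter_upwards [eventually_ge_atTop 1] with k hk using key k hk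

lemma cont_at : ContinuousAt (fun y => (maxFn FF y).toReal) LL := by
  rw [Metric.continuousAt_iff]
  intro ε hε
  obtain ⟨n, hn⟩ := exists_pow_lt_of_lt_one hε (show (1/2:ℝ) < 1 by norm_num)
  set k₀ := max n 2 with hk₀d
  have hk₀2 : 2 ≤ k₀ := le_max_right n 2
  have hk₀ε : (1/2:ℝ)^k₀ < ε := by
    calc (1/2:ℝ)^k₀ ≤ (1/2:ℝ)^n :=
          pow_le_pow_of_le_one (by norm_num) (by norm_num) (le_max_left n 2)
      _ < ε := hn
  refine ⟨min (et k₀) (1/4), lt_min (et_pos k₀) (by norm_num), ?_⟩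
  intro y hy
  rw [Real.dist_eq] at hy
  have hy1 : |y - LL| < et k₀ := lt_of_lt_of_le hy (min_le_left _ _)
  have hy2 : |y - LL| < 1/4 := lt_of_lt_of_le hy (min_le_right _ _)
  rw [Real.dist_eq, maxFn_LL_toReal]
  rcases lt_trichotomy y LL with hlt | heq | hgt
  · -- y < LL
    have hylo : aa k₀ < y := by
      rw [aa_eq k₀ (by omega)]
      rw [abs_of_nonpos (by linarith)] at hy1
      linarith
    have hex : ∃ m : ℕ, y ≤ aa (k₀ + m + 1) := by
      obtain ⟨j, hj⟩ := (et_tendsto.eventually (gt_mem_nhds (show (0:ℝ) < LL - y by linarith))).exists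
      refine ⟨j, ?_⟩
      have h1 : aa (j+1) ≤ aa (k₀ + j + 1) := aa_mono (by omega)
      have h2 : aa (j+1) = LL - et (j+1) := aa_succ_eq j
      have h3 : et (j+1) < et j := et_anti j
      linarith
    set m := Nat.find hex with hmd
    clear_value m
    have hm : y ≤ aa (k₀ + m + 1) := hmd ▸ Nat.find_spec hex
    set k := k₀ + m with hkd
    have hk2 : 2 ≤ k := by omega
    have hy_gt : aa k < y := by
      rcases Nat.eq_zero_or_pos m with h0 | h0
      · rw [hkd, h0]; simpa using hylo
      · have hlt' : m - 1 < Nat.find hex := by omega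
        have := Nat.find_min hex hlt'
        push_neg at this
        rwa [show k₀ + (m-1) + 1 = k by omega] at this
      
    have hg := maxFn_ge_left k hk2 y hy_gt (by rw [hkd]; exact hm)
    have hle := toReal_maxFn_le y
    have hpow : (1/2:ℝ)^k ≤ (1/2:ℝ)^k₀ :=
      pow_le_pow_of_le_one (by norm_num) (by norm_num) (by omega)
    rw [abs_of_nonpos (by linarith)]
    linarith
  · rw [heq, maxFn_LL_toReal]; simpa using hε
  · -- y > LL
    have h14 : y < LL + 1/4 := by
      rw [abs_of_nonneg (by linarith)] at hy2
      linarith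
    rw [maxFn_right y hgt h14]
    simpa using hε

theorem non_lebesgue_point_with_continuous_maximal (a : ℕ → ℝ)
    (h0 : a 0 = 0) (h1 : a 1 = 1)
    (hrec : ∀ k : ℕ, 1 ≤ k → a (k + 1) = a k + (2:ℝ) ^ (-((k * (k + 1) / 2 : ℕ) : ℤ))) :
    ∃ L : ℝ, Tendsto a atTop (nhds L) ∧ L < 2 ∧
      ∀ f : ℝ → ℝ,
        (f = fun x => Set.indicator (Set.Ioo L (L + 1)) (fun _ => (1 : ℝ)) x +
            ∑' k : ℕ, Set.indicator (Set.Ioo ((a k + a (k + 1)) / 2) (a (k + 1)))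
              (fun _ => (1 : ℝ)) x) →
        ¬ IsLebesguePoint f L ∧
          ContinuousAt (fun y => (maxFn f y).toReal) L ∧ (maxFn f L).toReal = 1 := by
  have key : ∀ k, 1 ≤ k → a k = aa k := by
    intro k hk
    induction k, hk using Nat.le_induction with
    | base => rw [h1, aa_one]
    | succ k hk ih =>
        rw [hrec k hk, ih, aa_eq k hk, aa_succ_eq]
        have hd : (2:ℝ) ^ (-((k * (k + 1) / 2 : ℕ) : ℤ)) = dd k := rfl
        have := et_succ k
        rw [hd]; linarith
  have haa : a = aa := by
    funext k
    rcases Nat.eq_zero_or_pos k with h | h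
    · rw [h, h0, aa_zero]
    · exact key k h
  refine ⟨LL, ?_, LL_lt_two, ?_⟩
  · rw [haa]; exact aa_tendsto
  · intro f hf
    have hfF : f = FF := by
      rw [hf, haa]
      funext x
      exact FF_eq x
    rw [hfF]
    exact ⟨not_leb, cont_at, maxFn_LL_toReal⟩
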